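/- Let δ = d/dy on R = 𝕆[y] and T = R[x; id, δ]. Suppose a, b ∈ T commute, a has x-degree m > 0 with coefficients in ℝ[y] (leading coefficient a_m), and b ≠ 0 has x-degree n with leading coefficient b_n. Then m·a_m·δ(b_n) = n·b_n·δ(a_m), and hence m·deg_y(b_n) = n·deg_y(a_m), so deg_y(b_n) is uniquely determined. -/

import Mathlib

/-!
Compare the coefficients of `x^(m+n-1)` in `ab` and `ba`. Since `x r = r x + δ r`, pushing `xⁱ`
past the leading term of `b` yields `a_m b_{n-1} + a_{m-1} b_n + m a_m δ(b_n)` for `ab`, and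
symmetrically for `ba`. The coefficients of `a` are real polynomials, hence commute with every
element of `𝕆[y]`, so everything but `m a_m δ(b_n) = n b_n δ(a_m)` cancels. The coefficient of
`y^(d+e-1)` in this identity, with `d, e` the `y`-degrees of `a_m, b_n`, is `m e - n d` times the
product of their leading coefficients, which is nonzero because that of `a_m` is real.
-/

/-- The octonions, realized via the Cayley–Dickson doubling of the real quaternions. -/
def Octonion : Type := Quaternion ℝ × Quaternion ℝ

noncomputable instance : AddCommGroup Octonion :=
  inferInstanceAs (AddCommGroup (Quaternion ℝ × Quaternion ℝ))

noncomputable instance : Module ℝ Octonion :=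
  inferInstanceAs (Module ℝ (Quaternion ℝ × Quaternion ℝ))

/-- Cayley–Dickson multiplication on pairs of quaternions. -/
noncomputable def Octonion.omul (a b : Quaternion ℝ × Quaternion ℝ) :
    Quaternion ℝ × Quaternion ℝ :=
  (a.1 * b.1 - star b.2 * a.2, b.2 * a.1 + a.2 * star b.1)

noncomputable instance : One Octonion := ⟨((1 : Quaternion ℝ), (0 : Quaternion ℝ))⟩

theorem Octonion.omul_add (a b c : Quaternion ℝ × Quaternion ℝ) :
    Octonion.omul a (b + c) = Octonion.omul a b + Octonion.omul a c := by
  unfold Octonion.omul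
  refine Prod.ext ?_ ?_ <;>
    simp only [Prod.fst_add, Prod.snd_add, mul_add, add_mul, star_add] <;> abel

theorem Octonion.add_omul (a b c : Quaternion ℝ × Quaternion ℝ) :
    Octonion.omul (a + b) c = Octonion.omul a c + Octonion.omul b c := by
  unfold Octonion.omul
  refine Prod.ext ?_ ?_ <;>
    simp only [Prod.fst_add, Prod.snd_add, mul_add, add_mul, star_add] <;> abel

theorem Octonion.zero_omul (a : Quaternion ℝ × Quaternion ℝ) :
    Octonion.omul 0 a = 0 := by
  unfold Octonion.omul; refine Prod.ext ?_ ?_ <;> simp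

theorem Octonion.omul_zero (a : Quaternion ℝ × Quaternion ℝ) :
    Octonion.omul a 0 = 0 := by
  unfold Octonion.omul; refine Prod.ext ?_ ?_ <;> simp

noncomputable instance : NonUnitalNonAssocRing Octonion :=
  { (inferInstance : AddCommGroup Octonion) with
    mul := Octonion.omul
    left_distrib := fun a b c => Octonion.omul_add a b c
    right_distrib := fun a b c => Octonion.add_omul a b c
    zero_mul := fun a => Octonion.zero_omul a
    mul_zero := fun a => Octonion.omul_zero a }

/-- `R = 𝕆[y]`, the polynomial ring over the octonions, as finitely supported
sequences of octonion coefficients. -/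
noncomputable abbrev OctPoly : Type := ℕ →₀ Octonion

/-- The convolution product on `𝕆[y]`. -/
noncomputable instance : Mul OctPoly :=
  ⟨fun p q => p.sum fun i a => q.sum fun j b => Finsupp.single (i + j) (a * b)⟩

theorem OctPoly.mul_zero (a : OctPoly) : a * (0 : OctPoly) = 0 := by
  show (Finsupp.sum a fun i c => Finsupp.sum 0 fun j b => Finsupp.single (i + j) (c * b)) = 0
  simp

/-- The variable `y` of `𝕆[y]`. -/
noncomputable def Yv : OctPoly := Finsupp.single 1 (1 : Octonion)

/-- The constant polynomial `1` of `𝕆[y]`. -/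
noncomputable def oneR : OctPoly := Finsupp.single 0 (1 : Octonion)

/-- The `y`-degree of a polynomial in `𝕆[y]` (with junk value `0` at `0`). -/
def degy (r : OctPoly) : ℕ := WithBot.unbotD 0 (r.support.max)

/-- The underlying additive group of the Ore extension `S = R[x; σ, δ]`:
finitely supported sequences of coefficients in `R = 𝕆[y]`. -/
noncomputable abbrev OrePoly : Type := ℕ →₀ OctPoly

/-- Left multiplication by `x` in `R[x; σ, δ]`, determined by
`x·(r xʲ) = σ(r) x^(j+1) + δ(r) xʲ`. -/
noncomputable def xmul (σ δ : OctPoly →+ OctPoly) : OrePoly →+ OrePoly :=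
  Finsupp.liftAddHom fun j =>
    (Finsupp.singleAddHom (j + 1)).comp σ + (Finsupp.singleAddHom j).comp δ

/-- The multiplication of the non-associative Ore extension `R[x; σ, δ]`:
`(Σᵢ aᵢ xⁱ)·q = Σᵢ aᵢ·(xⁱ·q)`, where `xⁱ` acts via iterated `xmul` and `aᵢ`
multiplies every coefficient from the left. -/
noncomputable def oreMul (σ δ : OctPoly →+ OctPoly) (p q : OrePoly) : OrePoly :=
  p.sum fun i a => Finsupp.mapRange (a * ·) (OctPoly.mul_zero a) ((xmul σ δ)^[i] q)

/-- The constant `1 = 1·x⁰` of the Ore extension. -/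
noncomputable def oneS : OrePoly := Finsupp.single 0 oneR

/-- The `x`-degree of an element of the Ore extension, valued in `ℤ ∪ {-∞}`. -/
def xdeg (p : OrePoly) : WithBot ℤ := (p.support.max).map (Nat.cast : ℕ → ℤ)

/-- `σ` is a unital `ℝ`-algebra endomorphism of `𝕆[y]`. -/
def IsAlgEndo (σ : OctPoly →+ OctPoly) : Prop :=
  (∀ p q : OctPoly, σ (p * q) = σ p * σ q) ∧ σ oneR = oneR ∧
    (∀ (r : ℝ) (p : OctPoly), σ (r • p) = r • σ p)

/-- `δ` is a `σ`-derivation of `𝕆[y]`. -/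
def IsSigmaDerivation (σ δ : OctPoly →+ OctPoly) : Prop :=
  (∀ p q : OctPoly, δ (p * q) = σ p * δ q + δ p * q) ∧
    (∀ (r : ℝ) (p : OctPoly), δ (r • p) = r • δ p)

/-- An element of `𝕆` is real if it is a real multiple of `1`. -/
def Octonion.IsReal (c : Octonion) : Prop := ∃ r : ℝ, c = r • (1 : Octonion)

/-- Membership in the nucleus of the Ore extension `R[x; σ, δ]`. -/
def OreNucleus (σ δ : OctPoly →+ OctPoly) (a : OrePoly) : Prop :=
  (∀ b c : OrePoly, oreMul σ δ a (oreMul σ δ b c) = oreMul σ δ (oreMul σ δ a b) c) ∧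
  (∀ b c : OrePoly, oreMul σ δ (oreMul σ δ b a) c = oreMul σ δ b (oreMul σ δ a c)) ∧
  (∀ b c : OrePoly, oreMul σ δ (oreMul σ δ b c) a = oreMul σ δ b (oreMul σ δ c a))

/-- The identity endomorphism of `𝕆[y]`. -/
noncomputable def idR : OctPoly →+ OctPoly := AddMonoidHom.id OctPoly

/-- The usual `y`-derivative `d/dy` on `𝕆[y]`: `c·yʲ ↦ (j·c)·y^(j-1)`. -/
noncomputable def derivR : OctPoly →+ OctPoly :=
  Finsupp.liftAddHom fun j =>
    (Finsupp.singleAddHom (j - 1)).comp (j • AddMonoidHom.id Octonion)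

/-- `y`, viewed as a degree-zero element of `T = 𝕆[y][x; id, d/dy]`. -/
noncomputable def yT : OrePoly := Finsupp.single 0 Yv

instance : NoZeroSMulDivisors ℝ Octonion :=
  inferInstanceAs (NoZeroSMulDivisors ℝ (Quaternion ℝ × Quaternion ℝ))

lemma Octonion.smul_one_mul (r : ℝ) (c : Octonion) : (r • (1 : Octonion)) * c = r • c := by
  show Octonion.omul (r • ((1, 0) : Quaternion ℝ × Quaternion ℝ)) c = (r • c.1, r • c.2)
  simp [Octonion.omul]

lemma Octonion.mul_smul_one (r : ℝ) (c : Octonion) : c * (r • (1 : Octonion)) = r • c := by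
  show Octonion.omul c (r • ((1, 0) : Quaternion ℝ × Quaternion ℝ)) = (r • c.1, r • c.2)
  simp [Octonion.omul]

lemma Octonion.IsReal.mul_comm {c : Octonion} (hc : c.IsReal) (x : Octonion) :
    c * x = x * c := by
  obtain ⟨r, rfl⟩ := hc
  rw [Octonion.smul_one_mul, Octonion.mul_smul_one]

lemma Octonion.IsReal.mul_ne_zero {c x : Octonion} (hc : c.IsReal) (hc0 : c ≠ 0) (hx : x ≠ 0) :
    c * x ≠ 0 := by
  obtain ⟨r, rfl⟩ := hc
  rw [Octonion.smul_one_mul]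
  exact smul_ne_zero (left_ne_zero_of_smul hc0) hx

lemma Octonion.nsmul_left_injective {c : Octonion} (hc : c ≠ 0) :
    Function.Injective fun k : ℕ => k • c := fun k l h => by
  have h' : (k : ℝ) • c = (l : ℝ) • c := by simpa only [Nat.cast_smul_eq_nsmul] using h
  exact_mod_cast smul_left_injective ℝ hc h'

def Finsupp.VanishesAbove {M : Type*} [Zero M] (p : ℕ →₀ M) (d : ℕ) : Prop :=
  ∀ j, d < j → p j = 0

lemma Finsupp.vanishesAbove_of_support_max {M : Type*} [Zero M] {p : ℕ →₀ M} {d : ℕ}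
    (h : p.support.max = d) : p.VanishesAbove d := fun j hj => by
  by_contra hne
  have hle : (j : WithBot ℕ) ≤ d := h ▸ Finset.le_max (Finsupp.mem_support_iff.mpr hne)
  exact (WithBot.coe_lt_coe.mpr hj).not_ge hle

lemma Finsupp.apply_ne_zero_of_support_max {M : Type*} [Zero M] {p : ℕ →₀ M} {d : ℕ}
    (h : p.support.max = d) : p d ≠ 0 :=
  Finsupp.mem_support_iff.mp (Finset.mem_of_max h)

lemma Finsupp.VanishesAbove.support_subset {M : Type*} [Zero M] {p : ℕ →₀ M} {d : ℕ}
    (hp : p.VanishesAbove d) : p.support ⊆ Finset.range (d + 1) := fun j hj => by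
  by_contra hjd
  exact Finsupp.mem_support_iff.mp hj (hp j (by simpa using hjd))

def Finsupp.coeffBelow {M : Type*} [Zero M] (p : ℕ →₀ M) : ℕ → M
  | 0 => 0
  | N + 1 => p N

lemma OctPoly.support_max_eq_degy {p : OctPoly} (hp : p ≠ 0) : p.support.max = degy p := by
  obtain ⟨d, hd⟩ := Finset.max_of_nonempty (Finsupp.support_nonempty_iff.mpr hp)
  rw [degy, hd, WithBot.unbotD_coe]; rfl

lemma OctPoly.mul_apply (p q : OctPoly) (k : ℕ) :
    (p * q) k = p.sum fun i a => q.sum fun j b => if i + j = k then a * b else 0 := by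
  show (p.sum fun i a => q.sum fun j b => Finsupp.single (i + j) (a * b)) k = _
  simp only [Finsupp.sum_apply, Finsupp.single_apply]

lemma OctPoly.zero_mul (q : OctPoly) : 0 * q = 0 := by
  show (Finsupp.sum 0 fun i a => Finsupp.sum q fun j b => Finsupp.single (i + j) (a * b)) = 0
  rw [Finsupp.sum_zero_index]

lemma OctPoly.mul_apply_add {p q : OctPoly} {d e : ℕ} (hp : p.VanishesAbove d)
    (hq : q.VanishesAbove e) : (p * q) (d + e) = p d * q e := by
  rw [OctPoly.mul_apply, Finsupp.sum_eq_single d, Finsupp.sum_eq_single e]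
  · simp
  · intro j _ hj
    rcases lt_or_gt_of_ne hj with hj | hj
    · simp [hj.ne]
    · simp [hq j hj]
  · simp
  · intro i _ hi
    refine Finset.sum_eq_zero fun j _ => ?_
    rcases lt_or_gt_of_ne hi with hi | hi
    · by_cases hj : e < j
      · simp [hq j hj]
      · simp [show i + j ≠ d + e by omega]
    · simp [hp i hi]
  · simp

lemma OctPoly.mul_add (p q r : OctPoly) : p * (q + r) = p * q + p * r := by
  show (p.sum fun i a => (q + r).sum fun j b => Finsupp.single (i + j) (a * b)) =
    (p.sum fun i a => q.sum fun j b => Finsupp.single (i + j) (a * b)) +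
      (p.sum fun i a => r.sum fun j b => Finsupp.single (i + j) (a * b))
  rw [← Finsupp.sum_add]
  refine Finsupp.sum_congr fun i _ => ?_
  rw [Finsupp.sum_add_index'] <;> simp [_root_.mul_add]

lemma OctPoly.mul_nsmul (p q : OctPoly) (k : ℕ) : p * (k • q) = k • (p * q) := by
  induction k with
  | zero => simpa using OctPoly.mul_zero p
  | succ k ih => rw [succ_nsmul, succ_nsmul, OctPoly.mul_add, ih]

lemma OctPoly.mul_comm_of_isReal {p : OctPoly} (hp : ∀ i, (p i).IsReal) (q : OctPoly) :
    p * q = q * p := by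
  ext k
  rw [OctPoly.mul_apply, OctPoly.mul_apply, Finsupp.sum_comm]
  refine Finsupp.sum_congr fun j _ => Finsupp.sum_congr fun i _ => ?_
  rw [add_comm j i, (hp i).mul_comm]

lemma derivR_apply (p : OctPoly) (k : ℕ) : derivR p k = (k + 1) • p (k + 1) := by
  show (p.sum fun j c => Finsupp.single (j - 1) (j • c)) k = _
  rw [Finsupp.sum_apply, Finsupp.sum_eq_single (k + 1)]
  · simp
  · intro j _ hj
    rcases j with _ | j
    · simp
    · simp [show j ≠ k by omega]
  · simp

lemma derivR_vanishesAbove {p : OctPoly} {e : ℕ} (hp : p.VanishesAbove (e + 1)) :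
    (derivR p).VanishesAbove e := fun k hk => by
  rw [derivR_apply, hp (k + 1) (by omega), smul_zero]

lemma derivR_eq_zero {p : OctPoly} (hp : p.VanishesAbove 0) : derivR p = 0 := by
  ext k
  rw [derivR_apply, hp (k + 1) (by omega), smul_zero]
  rfl

lemma OctPoly.mul_derivR_apply_of_add_eq {p q : OctPoly} {d e k : ℕ} (hp : p.VanishesAbove d)
    (hq : q.VanishesAbove e) (hk : k + 1 = d + e) : (p * derivR q) k = e • (p d * q e) := by
  rcases e with _ | e
  · rw [derivR_eq_zero hq, OctPoly.mul_zero, zero_smul]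
    rfl
  · obtain rfl : k = d + e := by omega
    rw [OctPoly.mul_apply_add hp (derivR_vanishesAbove hq), derivR_apply, mul_smul_comm]

lemma OctPoly.mul_degy_eq_of_nsmul_mul_derivR_eq {α β : OctPoly} {m n : ℕ}
    (hα : ∀ i, (α i).IsReal) (hα0 : α ≠ 0) (hβ0 : β ≠ 0)
    (h : m • (α * derivR β) = n • (β * derivR α)) : m * degy β = n * degy α := by
  have hd := OctPoly.support_max_eq_degy hα0
  have he := OctPoly.support_max_eq_degy hβ0
  rcases hde : degy α + degy β with _ | k
  · simp [show degy α = 0 by omega, show degy β = 0 by omega]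
  have hk := congrArg (· k) h
  simp only [Finsupp.smul_apply] at hk
  rw [OctPoly.mul_derivR_apply_of_add_eq (Finsupp.vanishesAbove_of_support_max hd)
      (Finsupp.vanishesAbove_of_support_max he) hde.symm,
    OctPoly.mul_derivR_apply_of_add_eq (Finsupp.vanishesAbove_of_support_max he)
      (Finsupp.vanishesAbove_of_support_max hd) (by omega),
    ← (hα _).mul_comm, smul_smul, smul_smul] at hk
  exact Octonion.nsmul_left_injective ((hα _).mul_ne_zero
    (Finsupp.apply_ne_zero_of_support_max hd) (Finsupp.apply_ne_zero_of_support_max he)) hk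

lemma xmul_apply_succ (σ δ : OctPoly →+ OctPoly) (p : OrePoly) (k : ℕ) :
    xmul σ δ p (k + 1) = σ (p k) + δ (p (k + 1)) := by
  show (p.sum fun j r => Finsupp.single (j + 1) (σ r) + Finsupp.single j (δ r)) (k + 1) = _
  rw [Finsupp.sum_apply]
  simp only [Finsupp.add_apply, Finsupp.single_apply, Finsupp.sum_add]
  simp only [add_left_inj, Finsupp.sum_ite_eq', Finsupp.mem_support_iff]
  split_ifs <;> simp_all

lemma xmul_apply_zero (σ δ : OctPoly →+ OctPoly) (p : OrePoly) :
    xmul σ δ p 0 = δ (p 0) := by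
  show (p.sum fun j r => Finsupp.single (j + 1) (σ r) + Finsupp.single j (δ r)) 0 = _
  rw [Finsupp.sum_apply]
  simp +contextual [Finsupp.single_apply]

lemma oreMul_apply (σ δ : OctPoly →+ OctPoly) (p q : OrePoly) (k : ℕ) :
    oreMul σ δ p q k = p.sum fun i a => a * ((xmul σ δ)^[i] q) k := by
  rw [oreMul, Finsupp.sum_apply]
  rfl

lemma OrePoly.coeffBelow_isReal {a : OrePoly} (ha : ∀ i j, (a i j).IsReal) (m j : ℕ) :
    (a.coeffBelow m j).IsReal := by
  rcases m with _ | m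
  · exact ⟨0, (zero_smul ℝ _).symm⟩
  · exact ha m j

section IdDerivation

variable {δ : OctPoly →+ OctPoly} {q : OrePoly} {N : ℕ}

lemma iterate_xmul_vanishesAbove (hq : q.VanishesAbove N) (i : ℕ) :
    ((xmul idR δ)^[i] q).VanishesAbove (N + i) := by
  induction i with
  | zero => exact hq
  | succ i ih =>
    rintro (_ | j) hj
    · omega
    rw [Function.iterate_succ_apply', xmul_apply_succ, ih j (by omega), ih (j + 1) (by omega),
      map_zero, map_zero, add_zero]

lemma iterate_xmul_apply_add (hq : q.VanishesAbove N) (i : ℕ) :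
    ((xmul idR δ)^[i] q) (N + i) = q N := by
  induction i with
  | zero => rfl
  | succ i ih =>
    rw [← add_assoc, Function.iterate_succ_apply', xmul_apply_succ, ih,
      iterate_xmul_vanishesAbove hq i (N + i + 1) (by omega), map_zero, add_zero]
    rfl

lemma iterate_xmul_apply_of_add_eq (hq : q.VanishesAbove N) {i k : ℕ} (hk : k + 1 = N + i) :
    ((xmul idR δ)^[i] q) k = q.coeffBelow N + i • δ (q N) := by
  induction i generalizing k with
  | zero =>
    subst hk
    simp [Finsupp.coeffBelow]
  | succ i ih =>
    rw [Function.iterate_succ_apply']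
    rcases k with _ | k
    · obtain ⟨rfl, rfl⟩ : N = 0 ∧ i = 0 := by omega
      simp [xmul_apply_zero, Finsupp.coeffBelow]
    · rw [xmul_apply_succ, ih (by omega), show k + 1 = N + i by omega,
        iterate_xmul_apply_add hq, succ_nsmul, ← add_assoc]
      rfl

lemma oreMul_apply_of_add_eq {p : OrePoly} {M k : ℕ} (hp : p.VanishesAbove M)
    (hq : q.VanishesAbove N) (hk : k + 1 = M + N) :
    oreMul idR δ p q k = p.coeffBelow M * q N + p M * (q.coeffBelow N + M • δ (q N)) := by
  rw [oreMul_apply, Finsupp.sum_of_support_subset p hp.support_subset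
      (fun i a => a * ((xmul idR δ)^[i] q) k) fun _ _ => OctPoly.zero_mul _,
    Finset.sum_range_succ, iterate_xmul_apply_of_add_eq hq (by omega)]
  congr 1
  rcases M with _ | M
  · simp [Finsupp.coeffBelow, OctPoly.zero_mul]
  · rw [Finset.sum_range_succ, Finset.sum_eq_zero, zero_add, show k = N + M by omega,
      iterate_xmul_apply_add hq]
    · rfl
    intro i hi
    rw [iterate_xmul_vanishesAbove hq i k (by have := Finset.mem_range.mp hi; omega),
      OctPoly.mul_zero]

lemma nsmul_mul_eq_of_commute {a b : OrePoly} {m n : ℕ} (ha : a.VanishesAbove m)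
    (hb : b.VanishesAbove n) (hreal : ∀ i j, (a i j).IsReal)
    (hcomm : oreMul idR δ a b = oreMul idR δ b a) :
    m • (a m * δ (b n)) = n • (b n * δ (a m)) := by
  rcases hmn : m + n with _ | k
  · obtain ⟨rfl, rfl⟩ : m = 0 ∧ n = 0 := by omega
    simp
  have hk := DFunLike.congr_fun hcomm k
  rw [oreMul_apply_of_add_eq ha hb (by omega), oreMul_apply_of_add_eq hb ha (by omega),
    OctPoly.mul_add, OctPoly.mul_add, OctPoly.mul_nsmul, OctPoly.mul_nsmul,
    OctPoly.mul_comm_of_isReal (hreal m) (b.coeffBelow n),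
    OctPoly.mul_comm_of_isReal (OrePoly.coeffBelow_isReal hreal m), add_left_comm] at hk
  exact add_left_cancel (add_left_cancel hk)

end IdDerivation

theorem second_coeff_eq_of_commute_general
    (a b : OrePoly) (m n : ℕ)
    (hm : a.support.max = (m : WithBot ℕ))
    (hcoeff : ∀ i j : ℕ, Octonion.IsReal (a i j))
    (hn : b.support.max = (n : WithBot ℕ))
    (hcomm : oreMul idR derivR a b = oreMul idR derivR b a) :
    m • (a m * derivR (b n)) = n • (b n * derivR (a m)) ∧
    m * degy (b n) = n * degy (a m) := by
  have key := nsmul_mul_eq_of_commute (Finsupp.vanishesAbove_of_support_max hm)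
    (Finsupp.vanishesAbove_of_support_max hn) hcoeff hcomm
  exact ⟨key, OctPoly.mul_degy_eq_of_nsmul_mul_derivR_eq (hcoeff m)
    (Finsupp.apply_ne_zero_of_support_max hm) (Finsupp.apply_ne_zero_of_support_max hn) key⟩

/-- Let `δ = d/dy` on `R = 𝕆[y]` and `T = R[x; id, δ]`.  Suppose `a, b ∈ T`
commute, `a` has `x`-degree `m > 0` with coefficients in `ℝ[y]` and leading
coefficient `a_m`, and `b ≠ 0` has `x`-degree `n` with leading coefficient `b_n`.
Then `m·a_m·δ(b_n) = n·b_n·δ(a_m)`, and hence `m·deg_y b_n = n·deg_y a_m`, so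
`deg_y b_n` is uniquely determined. -/
theorem second_coeff_eq_of_commute
    (a b : OrePoly) (m n : ℕ)
    (hm : a.support.max = (m : WithBot ℕ)) (hmpos : 0 < m)
    (hcoeff : ∀ i j : ℕ, Octonion.IsReal (a i j))
    (hb : b ≠ 0) (hn : b.support.max = (n : WithBot ℕ))
    (hcomm : oreMul idR derivR a b = oreMul idR derivR b a) :
    m • (a m * derivR (b n)) = n • (b n * derivR (a m)) ∧
    m * degy (b n) = n * degy (a m) :=
  second_coeff_eq_of_commute_general a b m n hm hcoeff hn hcomm
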